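/- Let T = [T_1,…,T_r] be a regular set in k[x_1,…,x_n] with p_r = cls(T_r) < n, and let P = P_d·x_m^d + ⋯ + P_1·x_m + P_0 be a polynomial with m > p_r and d = deg(P,x_m) > 0, where the P_j are the coefficients of P with respect to x_m. Then prem(P, T) = 0 if and only if prem(P_j, T) = 0 for all 0 ≤ j ≤ d. -/

import Mathlib

/-!
For a regular set `T` with product of initials `J`, `prem(P, T) = 0` holds exactly when `P`
lies in the saturated ideal `⟨T⟩ : J^∞`. One direction is the pseudo-division identity
`ini(T_r)^q P = Q T_r + prem(P, T_r)`. For the other, one descends along the chain: modulo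
`⟨T_1, …, T_{r-1}⟩`, an ideal stable under taking coefficients in `lv(T_r)`, a polynomial
reduced with respect to `T_r` and congruent to a multiple of `T_r` is killed by a power of
`ini(T_r)`; and regularity, through `res(A, T_r) = U A + V T_r`, makes the initials
non-zero-divisors modulo the saturations.

Since `x_m` occurs neither in `T` nor in `J`, both `⟨T⟩` and `J` commute with taking
coefficients in `x_m`, so `P` lies in the saturated ideal iff all its coefficients `P_j` do.
-/

open MvPolynomial

namespace CharSets

variable {n : ℕ} {K : Type*} [Field K]

/-- The coefficient of `x_i ^ d` in `F`, as a polynomial in the remaining variables. -/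
noncomputable def coefv (i : Fin n) (d : ℕ) (F : MvPolynomial (Fin n) K) :
    MvPolynomial (Fin n) K :=
  ∑ m ∈ F.support.filter (fun m => m i = d), monomial (Finsupp.erase i m) (F.coeff m)

/-- The leading coefficient of `F` with respect to the variable `x_i`. -/
noncomputable def lcv (i : Fin n) (F : MvPolynomial (Fin n) K) : MvPolynomial (Fin n) K :=
  coefv i (F.degreeOf i) F

/-- Auxiliary pseudo-division: computes (pseudo-quotient, pseudo-remainder) pairs,
with the first argument as fuel; the total power of the leading coefficient used is
exactly the fuel, so that starting with fuel `max(l - m + 1, 0)` yields the pair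
`(Q, R)` of the unique representation `lc(F,x_i)^q • G = Q*F + R` with
`q = max(l - m + 1, 0)` and `deg(R, x_i) < deg(F, x_i)`. -/
noncomputable def pdivAux (i : Fin n) (F : MvPolynomial (Fin n) K) :
    ℕ → MvPolynomial (Fin n) K × MvPolynomial (Fin n) K →
      MvPolynomial (Fin n) K × MvPolynomial (Fin n) K
  | 0, QR => QR
  | q + 1, QR =>
    if (QR.2).degreeOf i < F.degreeOf i then
      (lcv i F ^ (q + 1) * QR.1, lcv i F ^ (q + 1) * QR.2)
    else
      pdivAux i F q
        (lcv i F * QR.1 +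
            coefv i ((QR.2).degreeOf i) QR.2 * X i ^ ((QR.2).degreeOf i - F.degreeOf i),
          lcv i F * QR.2 -
            coefv i ((QR.2).degreeOf i) QR.2 * X i ^ ((QR.2).degreeOf i - F.degreeOf i) * F)

/-- The pseudo-remainder `prem(G, F, x_i)`. -/
noncomputable def prem (G F : MvPolynomial (Fin n) K) (i : Fin n) : MvPolynomial (Fin n) K :=
  (pdivAux i F (G.degreeOf i + 1 - F.degreeOf i) (0, G)).2

/-- The pseudo-quotient `pquo(G, F, x_i)`. -/
noncomputable def pquo (G F : MvPolynomial (Fin n) K) (i : Fin n) : MvPolynomial (Fin n) K :=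
  (pdivAux i F (G.degreeOf i + 1 - F.degreeOf i) (0, G)).1

/-- The class of `P`: the largest index (1-based) of a variable actually occurring in `P`;
the class of a constant is `0`. -/
noncomputable def cls (P : MvPolynomial (Fin n) K) : ℕ :=
  P.vars.sup fun i => (i : ℕ) + 1

/-- The degree of `G` in the leading variable of `P` (`0` if `P` is constant). -/
noncomputable def degLv (G P : MvPolynomial (Fin n) K) : ℕ :=
  if h : P.vars.Nonempty then G.degreeOf (P.vars.max' h) else 0

/-- `G` is R-reduced with respect to `P`, i.e. `deg(G, lv(P)) < deg(P, lv(P))`. -/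
def RReduced (G P : MvPolynomial (Fin n) K) : Prop :=
  degLv G P < degLv P P

/-- The initial of `P`: its leading coefficient w.r.t. its leading variable. -/
noncomputable def ini (P : MvPolynomial (Fin n) K) : MvPolynomial (Fin n) K :=
  if h : P.vars.Nonempty then lcv (P.vars.max' h) P else P

/-- Pseudo-remainder of `G` w.r.t. `F` in the leading variable of `F`
(in case `F` is constant, `m = 0` and the pseudo-remainder is `0`). -/
noncomputable def premLv (G F : MvPolynomial (Fin n) K) : MvPolynomial (Fin n) K :=
  if h : F.vars.Nonempty then prem G F (F.vars.max' h) else 0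

/-- Pseudo-quotient of `G` w.r.t. `F` in the leading variable of `F`. -/
noncomputable def pquoLv (G F : MvPolynomial (Fin n) K) : MvPolynomial (Fin n) K :=
  if h : F.vars.Nonempty then pquo G F (F.vars.max' h) else 0

/-- Iterated pseudo-remainder with respect to a triangular set `[T_1, …, T_r]`:
`prem(P, T) = prem(⋯prem(P, T_r, lv(T_r)), …, T_1, lv(T_1))`. -/
noncomputable def premTS (P : MvPolynomial (Fin n) K) (L : List (MvPolynomial (Fin n) K)) :
    MvPolynomial (Fin n) K :=
  L.foldr (fun T acc => premLv acc T) P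

/-- The Sylvester matrix of `F` and `G` with respect to the variable `x_i`. -/
noncomputable def sylvester (i : Fin n) (F G : MvPolynomial (Fin n) K) :
    Matrix (Fin (G.degreeOf i + F.degreeOf i)) (Fin (G.degreeOf i + F.degreeOf i))
      (MvPolynomial (Fin n) K) :=
  Matrix.of fun r c =>
    if (r : ℕ) < G.degreeOf i then
      if (r : ℕ) ≤ (c : ℕ) ∧ (c : ℕ) ≤ (r : ℕ) + F.degreeOf i then
        coefv i (F.degreeOf i + (r : ℕ) - (c : ℕ)) F
      else 0
    else
      if (r : ℕ) - G.degreeOf i ≤ (c : ℕ) ∧ (c : ℕ) ≤ (r : ℕ) then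
        coefv i (G.degreeOf i + ((r : ℕ) - G.degreeOf i) - (c : ℕ)) G
      else 0

/-- The resultant `res(F, G, x_i)` of `F` and `G` w.r.t. `x_i`
(the determinant of the Sylvester matrix). -/
noncomputable def resv (F G : MvPolynomial (Fin n) K) (i : Fin n) : MvPolynomial (Fin n) K :=
  (sylvester i F G).det

/-- Resultant of `F` and `G` w.r.t. the leading variable of `G`. -/
noncomputable def resLv (F G : MvPolynomial (Fin n) K) : MvPolynomial (Fin n) K :=
  if h : G.vars.Nonempty then resv F G (G.vars.max' h) else F

/-- Iterated resultant with respect to a triangular set: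
`res(F, T) = res(⋯res(F, T_r, lv(T_r)), …, T_1, lv(T_1))`. -/
noncomputable def resTS (F : MvPolynomial (Fin n) K) (L : List (MvPolynomial (Fin n) K)) :
    MvPolynomial (Fin n) K :=
  L.foldr (fun T acc => resLv acc T) F

/-- A triangular set: a nonempty ordered set of nonconstant polynomials with
strictly increasing classes. -/
def TriangularSet (L : List (MvPolynomial (Fin n) K)) : Prop :=
  L ≠ [] ∧ (∀ T ∈ L, 0 < cls T) ∧ L.Chain' fun A B => cls A < cls B

/-- An ascending set: either a single nonzero constant, or a triangular set in which
every later element is R-reduced with respect to every earlier one. -/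
def AscendingSet (L : List (MvPolynomial (Fin n) K)) : Prop :=
  (∃ a : K, a ≠ 0 ∧ L = [MvPolynomial.C a]) ∨
    (TriangularSet L ∧ L.Pairwise fun A B => RReduced B A)

/-- `F` has lower rank than `G`. -/
def rkLT (F G : MvPolynomial (Fin n) K) : Prop :=
  cls F < cls G ∨ (cls F = cls G ∧ 0 < cls F ∧ degLv F F < degLv G G)

/-- `F` and `G` have the same rank: neither has lower rank than the other. -/
def rkEQ (F G : MvPolynomial (Fin n) K) : Prop :=
  ¬ rkLT F G ∧ ¬ rkLT G F

/-- `B` has lower rank than `A` (as ascending sets). -/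
def ascLT (B A : List (MvPolynomial (Fin n) K)) : Prop :=
  (∃ j, j < min A.length B.length ∧
      (∀ i, i < j → rkEQ (A.getD i 0) (B.getD i 0)) ∧ rkLT (B.getD j 0) (A.getD j 0)) ∨
    (A.length < B.length ∧ ∀ i, i < A.length → rkEQ (A.getD i 0) (B.getD i 0))

/-- A Ritt characteristic set of the ideal `I`: an ascending set contained in `I`
of minimal rank among all ascending sets contained in `I`. -/
def RittCharSet (I : Ideal (MvPolynomial (Fin n) K)) (A : List (MvPolynomial (Fin n) K)) :
    Prop :=
  AscendingSet A ∧ (∀ a ∈ A, a ∈ I) ∧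
    ∀ B : List (MvPolynomial (Fin n) K), AscendingSet B → (∀ b ∈ B, b ∈ I) → ¬ ascLT B A

/-- The saturated ideal of a triangular set, as a set of polynomials. -/
def satTS (L : List (MvPolynomial (Fin n) K)) : Set (MvPolynomial (Fin n) K) :=
  {F | ∃ q : ℕ, 0 < q ∧ (L.map ini).prod ^ q * F ∈ Ideal.span {T | T ∈ L}}

/-- A regular set: a triangular set such that `res(ini(T_j), [T_1, …, T_{j-1}]) ≠ 0`
for `j = 2, …, r`. -/
def RegularSet (L : List (MvPolynomial (Fin n) K)) : Prop :=
  TriangularSet L ∧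
    ∀ j : ℕ, 0 < j → j < L.length → resTS (ini (L.getD j 0)) (L.take j) ≠ 0

/-- A normal triangular set: `deg(ini(T_j), lv(T_i)) = 0` for all `i < j`. -/
def NormalSet (L : List (MvPolynomial (Fin n) K)) : Prop :=
  TriangularSet L ∧ L.Pairwise fun A B => degLv (ini B) A = 0

/-- The purely lexicographical order on monomials determined by `x_1 < ⋯ < x_n`. -/
def plexLT (a b : Fin n →₀ ℕ) : Prop :=
  ∃ k : Fin n, a k < b k ∧ ∀ j : Fin n, k < j → a j = b j

/-- `m` is the leading monomial of `P` w.r.t. the plex order. -/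
def IsLpp (P : MvPolynomial (Fin n) K) (m : Fin n →₀ ℕ) : Prop :=
  m ∈ P.support ∧ ∀ m' ∈ P.support, m' ≠ m → plexLT m' m

/-- `G` is the reduced (Buchberger–)Gröbner basis of the ideal `I` w.r.t. the plex
term order determined by `x_1 < ⋯ < x_n`: its elements are nonzero monic members of `I`,
the leading monomial of every nonzero member of `I` is divisible by the leading monomial
of some element of `G`, every element of `G` is B-reduced w.r.t. the others, and `G`
generates `I`. -/
def IsReducedGB (I : Ideal (MvPolynomial (Fin n) K)) (G : Finset (MvPolynomial (Fin n) K)) :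
    Prop :=
  (∀ g ∈ G, g ∈ I ∧ g ≠ 0 ∧ ∀ m, IsLpp g m → g.coeff m = 1) ∧
    (∀ F ∈ I, F ≠ 0 → ∃ g ∈ G, ∃ mg mF, IsLpp g mg ∧ IsLpp F mF ∧ mg ≤ mF) ∧
    (∀ g ∈ G, ∀ g' ∈ G, g' ≠ g → ∀ m ∈ g.support, ∀ m', IsLpp g' m' → ¬ m' ≤ m) ∧
    Ideal.span (G : Set (MvPolynomial (Fin n) K)) = I

/-- `Cs` is the W-characteristic set of `I`: the minimal triangular set contained in the
reduced plex Gröbner basis `G` of `I`, i.e. for each class realized in `G`, `Cs` contains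
the element of that class whose leading monomial is minimal w.r.t. the plex order, the
elements being ordered by increasing class (equivalently, by the plex order). -/
def IsWCharSet (I : Ideal (MvPolynomial (Fin n) K)) (Cs : List (MvPolynomial (Fin n) K)) :
    Prop :=
  ∃ G : Finset (MvPolynomial (Fin n) K), IsReducedGB I G ∧
    (Cs.Chain' fun A B => cls A < cls B) ∧
    (∀ c ∈ Cs, c ∈ G) ∧
    (∀ g ∈ G, ∃ c ∈ Cs, cls c = cls g) ∧
    ∀ c ∈ Cs, ∀ g ∈ G, cls g = cls c → g ≠ c →
      ∃ mc mg, IsLpp c mc ∧ IsLpp g mg ∧ plexLT mc mg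

/-- The set of common zeros of a set `S` of polynomials over `k`, taken in `Kc ^ n`
for an extension `Kc` of `k`. -/
def zeroSet {k : Type*} [Field k] (Kc : Type*) [CommRing Kc] [Algebra k Kc]
    (S : Set (MvPolynomial (Fin n) k)) : Set (Fin n → Kc) :=
  {a | ∀ p ∈ S, MvPolynomial.aeval a p = 0}

lemma degreeOf_mul_le_of_degreeOf_eq_zero {i : Fin n} {a : MvPolynomial (Fin n) K}
    (ha : a.degreeOf i = 0) (b : MvPolynomial (Fin n) K) :
    (a * b).degreeOf i ≤ b.degreeOf i := by
  simpa [ha] using degreeOf_mul_le i a b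

lemma degreeOf_pow_eq_zero {i : Fin n} {a : MvPolynomial (Fin n) K}
    (ha : a.degreeOf i = 0) (k : ℕ) : (a ^ k).degreeOf i = 0 :=
  Nat.le_zero.1 ((degreeOf_pow_le i a k).trans (by rw [ha, mul_zero]))

lemma coeff_coefv (i : Fin n) (d : ℕ) (F : MvPolynomial (Fin n) K) (ν : Fin n →₀ ℕ) :
    coeff ν (coefv i d F) = if ν i = 0 then F.coeff (ν + Finsupp.single i d) else 0 := by
  classical
  have herase : ∀ μ : Fin n →₀ ℕ, μ i = d → μ.erase i = ν → μ = ν + Finsupp.single i d :=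
    fun μ hμ hν => by rw [← hν, ← hμ, ← Finsupp.update_eq_erase_add_single, Finsupp.update_self]
  simp only [coefv, coeff_sum, coeff_monomial]
  split_ifs with h0
  · have hν : (ν + Finsupp.single i d).erase i = ν := by
      rw [Finsupp.erase_add, Finsupp.erase_single, add_zero, Finsupp.erase_of_notMem_support]
      simpa using h0
    rw [Finset.sum_eq_single (ν + Finsupp.single i d)]
    · rw [if_pos hν]
    · intro μ hμ hne
      exact if_neg fun h => hne (herase μ (Finset.mem_filter.1 hμ).2 h)
    · intro hnot
      rw [if_pos hν]
      by_contra hc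
      exact hnot (Finset.mem_filter.2 ⟨mem_support_iff.2 hc, by simp [h0]⟩)
  · refine Finset.sum_eq_zero fun μ _ => if_neg fun h => h0 ?_
    rw [← h, Finsupp.erase_same]

lemma mem_support_coefv {i : Fin n} {d : ℕ} {F : MvPolynomial (Fin n) K} {ν : Fin n →₀ ℕ}
    (h : ν ∈ (coefv i d F).support) : ν i = 0 ∧ ν + Finsupp.single i d ∈ F.support := by
  rw [mem_support_iff, coeff_coefv] at h
  split_ifs at h with h0
  · exact ⟨h0, mem_support_iff.2 h⟩
  · exact absurd rfl h

lemma coefv_eq_zero_of_degreeOf_lt {i : Fin n} {d : ℕ} {F : MvPolynomial (Fin n) K}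
    (h : F.degreeOf i < d) : coefv i d F = 0 := by
  refine eq_zero_iff.2 fun ν => notMem_support_iff.1 fun hν => ?_
  obtain ⟨h0, hmem⟩ := mem_support_coefv hν
  have := monomial_le_degreeOf i hmem
  simp [h0] at this
  omega

lemma degreeOf_coefv_eq_zero (i : Fin n) (d : ℕ) (F : MvPolynomial (Fin n) K) :
    (coefv i d F).degreeOf i = 0 :=
  Nat.le_zero.1 (degreeOf_le_iff.2 fun _ hν => (mem_support_coefv hν).1.le)

lemma degreeOf_coefv_le (i j : Fin n) (d : ℕ) (F : MvPolynomial (Fin n) K) :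
    (coefv i d F).degreeOf j ≤ F.degreeOf j := by
  refine degreeOf_le_iff.2 fun ν hν => ?_
  calc ν j ≤ (ν + Finsupp.single i d) j := by simp
    _ ≤ F.degreeOf j := monomial_le_degreeOf j (mem_support_coefv hν).2

lemma coefv_zero_eq_self {i : Fin n} {F : MvPolynomial (Fin n) K} (h : F.degreeOf i = 0) :
    coefv i 0 F = F := by
  ext ν
  rw [coeff_coefv, Finsupp.single_zero, add_zero, ite_eq_left_iff]
  intro h0
  refine (notMem_support_iff.1 fun hν => h0 ?_).symm
  simpa [h] using monomial_le_degreeOf i hν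

lemma coeff_erase_coefv (i : Fin n) (F : MvPolynomial (Fin n) K) (ν : Fin n →₀ ℕ) :
    coeff (ν.erase i) (coefv i (ν i) F) = F.coeff ν := by
  rw [coeff_coefv, if_pos (Finsupp.erase_same ..), ← Finsupp.update_eq_erase_add_single,
    Finsupp.update_self]

lemma lcv_ne_zero {i : Fin n} {F : MvPolynomial (Fin n) K} (h : F ≠ 0) : lcv i F ≠ 0 := by
  obtain ⟨ν, hν, hmax⟩ :=
    Finset.exists_mem_eq_sup F.support (support_nonempty.2 h) fun μ => μ i
  rw [← degreeOf_eq_sup] at hmax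
  intro hc
  have := coeff_erase_coefv i F ν
  rw [← hmax, ← lcv, hc, coeff_zero] at this
  exact mem_support_iff.1 hν this.symm

lemma degreeOf_le_pred_of_coefv_eq_zero {i : Fin n} {D : ℕ} {F : MvPolynomial (Fin n) K}
    (hle : F.degreeOf i ≤ D) (h0 : coefv i D F = 0) : F.degreeOf i ≤ D - 1 := by
  refine degreeOf_le_iff.2 fun ν hν => ?_
  have hνD : ν i ≤ D := degreeOf_le_iff.1 hle ν hν
  suffices ν i ≠ D by omega
  intro hD
  have := coeff_erase_coefv i F ν
  rw [hD, h0, coeff_zero] at this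
  exact mem_support_iff.1 hν this.symm

noncomputable def toPoly (i : Fin n) :
    MvPolynomial (Fin n) K →ₐ[K] Polynomial (MvPolynomial (Fin n) K) :=
  aeval fun j => if j = i then Polynomial.X else Polynomial.C (X j)

lemma toPoly_monomial_of_eq_zero {i : Fin n} {μ : Fin n →₀ ℕ} (hμ : μ i = 0) (c : K) :
    toPoly i (monomial μ c) = Polynomial.C (monomial μ c) := by
  rw [toPoly, aeval_monomial, monomial_eq, map_mul, Finsupp.prod, Finsupp.prod, map_prod,
    Polynomial.algebraMap_apply, algebraMap_eq]
  congr 1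
  refine Finset.prod_congr rfl fun j hj => ?_
  have hji : j ≠ i := by rintro rfl; exact Finsupp.mem_support_iff.1 hj hμ
  rw [if_neg hji, map_pow]

lemma toPoly_monomial (i : Fin n) (μ : Fin n →₀ ℕ) (c : K) :
    toPoly i (monomial μ c) = Polynomial.C (monomial (μ.erase i) c) * Polynomial.X ^ (μ i) := by
  have hsplit : monomial μ c = monomial (μ.erase i) c * X i ^ (μ i) := by
    rw [X_pow_eq_monomial, monomial_mul, mul_one, ← Finsupp.update_eq_erase_add_single,
      Finsupp.update_self]
  rw [hsplit, map_mul, map_pow, toPoly_monomial_of_eq_zero (Finsupp.erase_same ..)]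
  simp [toPoly]

lemma coeff_toPoly (i : Fin n) (F : MvPolynomial (Fin n) K) (d : ℕ) :
    (toPoly i F).coeff d = coefv i d F := by
  conv_lhs => rw [F.as_sum]
  rw [map_sum, Polynomial.finsetSum_coeff, coefv, Finset.sum_filter]
  refine Finset.sum_congr rfl fun μ _ => ?_
  rw [toPoly_monomial, Polynomial.coeff_C_mul_X_pow]
  exact if_congr eq_comm rfl rfl

lemma natDegree_toPoly_le (i : Fin n) (F : MvPolynomial (Fin n) K) :
    (toPoly i F).natDegree ≤ F.degreeOf i :=
  Polynomial.natDegree_le_iff_coeff_eq_zero.2 fun _ hd => by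
    rw [coeff_toPoly, coefv_eq_zero_of_degreeOf_lt hd]

lemma toPoly_of_degreeOf_eq_zero {i : Fin n} {F : MvPolynomial (Fin n) K}
    (h : F.degreeOf i = 0) : toPoly i F = Polynomial.C F := by
  ext1 d
  rw [coeff_toPoly, Polynomial.coeff_C]
  split_ifs with hd
  · rw [hd, coefv_zero_eq_self h]
  · exact coefv_eq_zero_of_degreeOf_lt (by omega)

lemma degreeOf_eq_zero_of_toPoly_eq_C {i : Fin n} {F : MvPolynomial (Fin n) K}
    (h : toPoly i F = Polynomial.C F) : F.degreeOf i = 0 := by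
  by_contra hF
  refine lcv_ne_zero (i := i) (F := F) (fun h0 => hF (by rw [h0, degreeOf_zero])) ?_
  rw [lcv, ← coeff_toPoly, h, Polynomial.coeff_C, if_neg hF]

lemma eval_toPoly (i : Fin n) (F : MvPolynomial (Fin n) K) : (toPoly i F).eval (X i) = F := by
  induction F using MvPolynomial.induction_on with
  | C a => simp [toPoly]
  | add p q hp hq => rw [map_add, Polynomial.eval_add, hp, hq]
  | mul_X p j hp =>
    rw [map_mul, Polynomial.eval_mul, hp, toPoly, aeval_X]
    split_ifs with hj
    · rw [hj, Polynomial.eval_X]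
    · rw [Polynomial.eval_C]

lemma sum_coefv_mul_X_pow (i : Fin n) (F : MvPolynomial (Fin n) K) :
    ∑ t ∈ Finset.range (F.degreeOf i + 1), coefv i t F * X i ^ t = F := by
  conv_rhs => rw [← eval_toPoly i F,
    Polynomial.eval_eq_sum_range' (Nat.lt_succ_of_le (natDegree_toPoly_le i F))]
  simp only [coeff_toPoly]

lemma coefv_sub (i : Fin n) (d : ℕ) (F G : MvPolynomial (Fin n) K) :
    coefv i d (F - G) = coefv i d F - coefv i d G := by
  simp only [← coeff_toPoly, map_sub, Polynomial.coeff_sub]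

lemma coefv_mul_of_degreeOf_eq_zero {i : Fin n} {a : MvPolynomial (Fin n) K}
    (ha : a.degreeOf i = 0) (t : ℕ) (b : MvPolynomial (Fin n) K) :
    coefv i t (a * b) = a * coefv i t b := by
  rw [← coeff_toPoly, map_mul, toPoly_of_degreeOf_eq_zero ha, Polynomial.coeff_C_mul,
    coeff_toPoly]

lemma coefv_X_pow_mul {i : Fin n} {e t : ℕ} (h : e ≤ t) (b : MvPolynomial (Fin n) K) :
    coefv i t (X i ^ e * b) = coefv i (t - e) b := by
  rw [← coeff_toPoly, map_mul, map_pow, ← Nat.sub_add_cancel h, ← coeff_toPoly]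
  simp [toPoly, Polynomial.coeff_X_pow_mul]

lemma coefv_X_pow (i : Fin n) (e : ℕ) : coefv i e (X i ^ e : MvPolynomial (Fin n) K) = 1 := by
  have := coefv_X_pow_mul (i := i) (le_refl e) (1 : MvPolynomial (Fin n) K)
  rwa [mul_one, Nat.sub_self, coefv_zero_eq_self (degreeOf_one i)] at this

lemma coefv_mul_of_degreeOf_le {i : Fin n} {d e : ℕ} {a b : MvPolynomial (Fin n) K}
    (ha : a.degreeOf i ≤ d) (hb : b.degreeOf i ≤ e) :
    coefv i (d + e) (a * b) = coefv i d a * coefv i e b := by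
  simp only [← coeff_toPoly, map_mul]
  exact Polynomial.coeff_mul_add_eq_of_natDegree_le ((natDegree_toPoly_le i a).trans ha)
    ((natDegree_toPoly_le i b).trans hb)

lemma coefv_mem_span_of_degreeOf_eq_zero {i : Fin n} {S : Set (MvPolynomial (Fin n) K)}
    (hS : ∀ g ∈ S, g.degreeOf i = 0) {F : MvPolynomial (Fin n) K} (hF : F ∈ Ideal.span S)
    (t : ℕ) : coefv i t F ∈ Ideal.span S := by
  have hmap : Ideal.map (toPoly i) (Ideal.span S) = Ideal.map Polynomial.C (Ideal.span S) := by
    rw [Ideal.map_span, Ideal.map_span]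
    congr 1
    exact Set.image_congr fun g hg => toPoly_of_degreeOf_eq_zero (hS g hg)
  have := Ideal.mem_map_of_mem (toPoly i) hF
  rw [hmap, Ideal.mem_map_C_iff] at this
  simpa only [coeff_toPoly] using this t

lemma degreeOf_lcv (i : Fin n) (F : MvPolynomial (Fin n) K) : (lcv i F).degreeOf i = 0 :=
  degreeOf_coefv_eq_zero i _ F

lemma degreeOf_pseudoStep_le {i : Fin n} {F R : MvPolynomial (Fin n) K}
    (hFR : F.degreeOf i ≤ R.degreeOf i) :
    (lcv i F * R - coefv i (R.degreeOf i) R * X i ^ (R.degreeOf i - F.degreeOf i) * F).degreeOf i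
      ≤ R.degreeOf i - 1 := by
  set D := R.degreeOf i
  refine degreeOf_le_pred_of_coefv_eq_zero ?_ ?_
  · refine (degreeOf_sub_le i _ _).trans (max_le ?_ ?_)
    · exact degreeOf_mul_le_of_degreeOf_eq_zero (degreeOf_lcv i F) R
    · refine (degreeOf_mul_le i _ F).trans ?_
      have := degreeOf_mul_le_of_degreeOf_eq_zero (degreeOf_coefv_eq_zero i D R)
        (X i ^ (D - F.degreeOf i))
      rw [degreeOf_X_self_pow] at this
      omega
  · rw [coefv_sub, coefv_mul_of_degreeOf_eq_zero (degreeOf_lcv i F), mul_assoc,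
      coefv_mul_of_degreeOf_eq_zero (degreeOf_coefv_eq_zero i D R),
      coefv_X_pow_mul (Nat.sub_le D _), Nat.sub_sub_self hFR, lcv, mul_comm, sub_self]

lemma pdivAux_spec {i : Fin n} {F : MvPolynomial (Fin n) K} (hF : 0 < F.degreeOf i)
    (f : ℕ) (Q R : MvPolynomial (Fin n) K) (hR : R.degreeOf i ≤ F.degreeOf i - 1 + f) :
    (pdivAux i F f (Q, R)).1 * F + (pdivAux i F f (Q, R)).2 = lcv i F ^ f * (Q * F + R) ∧
      (pdivAux i F f (Q, R)).2.degreeOf i < F.degreeOf i := by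
  induction f generalizing Q R with
  | zero => simp only [pdivAux, pow_zero, one_mul]; exact ⟨trivial, by omega⟩
  | succ f ih =>
    by_cases hlt : R.degreeOf i < F.degreeOf i
    · simp only [pdivAux, hlt, if_true]
      refine ⟨by ring, ?_⟩
      have := degreeOf_mul_le_of_degreeOf_eq_zero
        (degreeOf_pow_eq_zero (degreeOf_lcv i F) (f + 1)) R
      omega
    · simp only [pdivAux, hlt, if_false]
      have hstep := degreeOf_pseudoStep_le (not_lt.1 hlt)
      refine (ih _ _ (by omega)).imp_left fun h => h.trans ?_
      ring

lemma pquo_mul_add_prem {i : Fin n} {F : MvPolynomial (Fin n) K} (hF : 0 < F.degreeOf i)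
    (G : MvPolynomial (Fin n) K) :
    pquo G F i * F + prem G F i = lcv i F ^ (G.degreeOf i + 1 - F.degreeOf i) * G := by
  have h := (pdivAux_spec hF (G.degreeOf i + 1 - F.degreeOf i) 0 G (by omega)).1
  rwa [zero_mul, zero_add] at h

lemma degreeOf_prem_lt {i : Fin n} {F : MvPolynomial (Fin n) K} (hF : 0 < F.degreeOf i)
    (G : MvPolynomial (Fin n) K) : (prem G F i).degreeOf i < F.degreeOf i :=
  (pdivAux_spec hF (G.degreeOf i + 1 - F.degreeOf i) 0 G (by omega)).2

lemma degreeOf_sub_coefv_mul_X_pow_le {i : Fin n} {D : ℕ} {Q : MvPolynomial (Fin n) K}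
    (hQ : Q.degreeOf i ≤ D) : (Q - coefv i D Q * X i ^ D).degreeOf i ≤ D - 1 := by
  refine degreeOf_le_pred_of_coefv_eq_zero ((degreeOf_sub_le i _ _).trans (max_le hQ ?_)) ?_
  · simpa using degreeOf_mul_le_of_degreeOf_eq_zero (degreeOf_coefv_eq_zero i D Q) (X i ^ D)
  · rw [coefv_sub, coefv_mul_of_degreeOf_eq_zero (degreeOf_coefv_eq_zero i D Q), coefv_X_pow,
      mul_one, sub_self]

/-- Compare coefficients of `Q * T - W` from the top down: the top one shows that
`lcv i T` times the leading coefficient of `Q` lies in `J`, which lowers the degree of `Q`. -/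
lemma lcv_pow_mul_mem_of_mul_sub_mem {i : Fin n} {T : MvPolynomial (Fin n) K}
    {J : Ideal (MvPolynomial (Fin n) K)}
    (hJ : ∀ F ∈ J, ∀ t, coefv i t F ∈ J) {D : ℕ} {Q W : MvPolynomial (Fin n) K}
    (hQ : Q.degreeOf i ≤ D) (hW : W.degreeOf i < T.degreeOf i) (h : Q * T - W ∈ J) :
    lcv i T ^ (D + 1) * W ∈ J := by
  induction D generalizing Q W with
  | zero =>
    have htop := hJ _ h (T.degreeOf i)
    rw [coefv_sub, coefv_mul_of_degreeOf_eq_zero (Nat.le_zero.1 hQ),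
      coefv_eq_zero_of_degreeOf_lt hW, sub_zero, ← lcv] at htop
    have heq : lcv i T ^ (0 + 1) * W = Q * lcv i T * T - lcv i T * (Q * T - W) := by ring
    rw [heq]
    exact J.sub_mem (J.mul_mem_right _ htop) (J.mul_mem_left _ h)
  | succ D ih =>
    set c := coefv i (D + 1) Q
    have htop : c * lcv i T ∈ J := by
      have := hJ _ h (D + 1 + T.degreeOf i)
      rwa [coefv_sub, coefv_eq_zero_of_degreeOf_lt (F := W) (by omega), sub_zero,
        coefv_mul_of_degreeOf_le hQ le_rfl] at this
    have hQ₁ : (lcv i T * (Q - c * X i ^ (D + 1))).degreeOf i ≤ D :=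
      (degreeOf_mul_le_of_degreeOf_eq_zero (degreeOf_lcv i T) _).trans
        (degreeOf_sub_coefv_mul_X_pow_le hQ)
    have hW₁ : (lcv i T * W).degreeOf i < T.degreeOf i :=
      (degreeOf_mul_le_of_degreeOf_eq_zero (degreeOf_lcv i T) W).trans_lt hW
    have h₁ : lcv i T * (Q - c * X i ^ (D + 1)) * T - lcv i T * W ∈ J := by
      have heq : lcv i T * (Q - c * X i ^ (D + 1)) * T - lcv i T * W
          = lcv i T * (Q * T - W) - c * lcv i T * (X i ^ (D + 1) * T) := by ring
      rw [heq]
      exact J.sub_mem (J.mul_mem_left _ h) (J.mul_mem_right _ htop)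
    simpa only [pow_succ, mul_assoc] using ih hQ₁ hW₁ h₁

lemma degreeOf_det_eq_zero {N : ℕ} {i : Fin n}
    (M : Matrix (Fin N) (Fin N) (MvPolynomial (Fin n) K)) (h : ∀ r c, (M r c).degreeOf i = 0) :
    M.det.degreeOf i = 0 := by
  refine degreeOf_eq_zero_of_toPoly_eq_C ?_
  rw [AlgHom.map_det, RingHom.map_det]
  congr 1
  ext r c : 1
  exact toPoly_of_degreeOf_eq_zero (h r c)

lemma degreeOf_resv (A T : MvPolynomial (Fin n) K) (i : Fin n) : (resv A T i).degreeOf i = 0 := by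
  refine degreeOf_det_eq_zero _ fun r c => ?_
  simp only [sylvester, Matrix.of_apply]
  split_ifs <;> first | exact degreeOf_coefv_eq_zero .. | exact degreeOf_zero i

/-- A row of the Sylvester matrix applied to the vector of powers `x_i ^ (N - 1 - c)`. -/
lemma sum_ite_coefv_mul_X_pow (i : Fin n) (F : MvPolynomial (Fin n) K) {N s e : ℕ}
    (he : e = s + F.degreeOf i) (heN : e < N) :
    ∑ c : Fin N, (if s ≤ (c : ℕ) ∧ (c : ℕ) ≤ e then coefv i (F.degreeOf i + s - c) F else 0) *
      X i ^ (N - 1 - c) = X i ^ (N - 1 - e) * F := by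
  conv_rhs => rw [← sum_coefv_mul_X_pow i F, Finset.mul_sum]
  rw [Fin.sum_univ_eq_sum_range (fun c => (if s ≤ c ∧ c ≤ e then
    coefv i (F.degreeOf i + s - c) F else 0) * X i ^ (N - 1 - c)) N]
  simp only [ite_mul, zero_mul]
  rw [← Finset.sum_filter]
  refine Finset.sum_nbij' (fun c => e - c) (fun j => e - j) ?_ ?_ ?_ ?_ ?_
  all_goals intro c hc; simp only [Finset.mem_filter, Finset.mem_range] at hc ⊢
  · omega
  · omega
  · omega
  · omega
  · rw [show F.degreeOf i + s - c = e - c by omega,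
      show N - 1 - c = (N - 1 - e) + (e - c) by omega, pow_add]
    ring

lemma resv_mem_span_pair {i : Fin n} {T : MvPolynomial (Fin n) K} (hT : 0 < T.degreeOf i)
    (A : MvPolynomial (Fin n) K) : resv A T i ∈ Ideal.span {A, T} := by
  set N := T.degreeOf i + A.degreeOf i
  set S := sylvester i A T
  set v : Fin N → MvPolynomial (Fin n) K := fun c => X i ^ (N - 1 - c)
  have hrow : ∀ r, S.mulVec v r ∈ Ideal.span {A, T} := by
    intro r
    simp only [Matrix.mulVec, dotProduct, S, sylvester, Matrix.of_apply, v]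
    split_ifs with hr
    · rw [sum_ite_coefv_mul_X_pow i A rfl (by omega)]
      exact Ideal.mul_mem_left _ _ (Ideal.subset_span (by simp))
    · rw [sum_ite_coefv_mul_X_pow i T (s := r - T.degreeOf i) (by omega) (by omega)]
      exact Ideal.mul_mem_left _ _ (Ideal.subset_span (by simp))
  -- Cramer's rule in the last coordinate, where `v` is `1`
  have hlast := congrFun (congrArg (fun M => M.mulVec v) (Matrix.adjugate_mul S))
    ⟨N - 1, by omega⟩
  simp only [← Matrix.mulVec_mulVec, Matrix.smul_mulVec, Matrix.one_mulVec, Pi.smul_apply, v,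
    Nat.sub_self, pow_zero, smul_eq_mul, mul_one] at hlast
  rw [resv, ← hlast, Matrix.mulVec, dotProduct]
  exact Ideal.sum_mem _ fun k _ => Ideal.mul_mem_left _ _ (hrow k)

lemma cls_eq_max'_add_one {T : MvPolynomial (Fin n) K} (hv : T.vars.Nonempty) :
    cls T = (T.vars.max' hv : ℕ) + 1 :=
  le_antisymm (Finset.sup_le fun j hj => by simpa using T.vars.le_max' j hj)
    (Finset.le_sup (f := fun j : Fin n => (j : ℕ) + 1) (T.vars.max'_mem hv))

lemma vars_nonempty_of_cls_pos {T : MvPolynomial (Fin n) K} (h : 0 < cls T) :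
    T.vars.Nonempty :=
  Finset.nonempty_iff_ne_empty.2 fun he => by simp [cls, he] at h

lemma degreeOf_eq_zero_of_cls_le {T : MvPolynomial (Fin n) K} {j : Fin n}
    (h : cls T ≤ j) : T.degreeOf j = 0 := by
  by_contra hj
  have := Finset.le_sup (f := fun j : Fin n => (j : ℕ) + 1) (mem_vars_iff_degreeOf_ne_zero.2 hj)
  exact absurd (this.trans h) (by simp)

lemma degreeOf_max'_vars_pos {T : MvPolynomial (Fin n) K} (hv : T.vars.Nonempty) :
    0 < T.degreeOf (T.vars.max' hv) :=
  Nat.pos_of_ne_zero (mem_vars_iff_degreeOf_ne_zero.1 (T.vars.max'_mem hv))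

lemma ini_ne_zero {T : MvPolynomial (Fin n) K} (hv : T.vars.Nonempty) : ini T ≠ 0 := by
  rw [ini, dif_pos hv]
  exact lcv_ne_zero fun h0 => by simp [h0] at hv

lemma degreeOf_ini_le (T : MvPolynomial (Fin n) K) (j : Fin n) :
    (ini T).degreeOf j ≤ T.degreeOf j := by
  unfold ini
  split
  · exact degreeOf_coefv_le _ j _ T
  · exact le_rfl

lemma degreeOf_prod_ini_eq_zero {L : List (MvPolynomial (Fin n) K)} {j : Fin n}
    (h : ∀ T ∈ L, T.degreeOf j = 0) : (L.map ini).prod.degreeOf j = 0 := by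
  refine List.prod_induction (fun a : MvPolynomial (Fin n) K => a.degreeOf j = 0)
    (fun a b ha hb => by simpa [ha, hb] using degreeOf_mul_le j a b) (degreeOf_one j) ?_
  simp only [List.mem_map]
  rintro _ ⟨T, hT, rfl⟩
  exact Nat.le_zero.1 ((degreeOf_ini_le T j).trans (h T hT).le)

lemma premTS_append (P : MvPolynomial (Fin n) K) (L : List (MvPolynomial (Fin n) K))
    (T : MvPolynomial (Fin n) K) : premTS P (L ++ [T]) = premTS (premLv P T) L := by
  rw [premTS, List.foldr_append]
  rfl

lemma resTS_append (A : MvPolynomial (Fin n) K) (L : List (MvPolynomial (Fin n) K))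
    (T : MvPolynomial (Fin n) K) : resTS A (L ++ [T]) = resTS (resLv A T) L := by
  rw [resTS, List.foldr_append]
  rfl

lemma TriangularSet.pairwise {L : List (MvPolynomial (Fin n) K)} (h : TriangularSet L) :
    L.Pairwise fun A B => cls A < cls B :=
  List.pairwise_map.1 ((List.isChain_map cls).2 h.2.2).pairwise

lemma TriangularSet.cls_le_last {L : List (MvPolynomial (Fin n) K)} (h : TriangularSet L)
    {T : MvPolynomial (Fin n) K} (hT : T ∈ L) : cls T ≤ cls (L.getD (L.length - 1) 0) := by
  have hne := List.ne_nil_of_mem hT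
  rw [List.getD_eq_getElem _ _ (by simpa [List.length_pos_iff] using hne),
    ← List.getLast_eq_getElem hne]
  exact (h.pairwise.imp le_of_lt).rel_getLast_of_rel_getLast_getLast hT le_rfl

/-- Regular sets, built by appending one polynomial at a time; the empty chain is allowed so
that induction along the chain works. -/
inductive RegularChain : List (MvPolynomial (Fin n) K) → Prop
  | nil : RegularChain []
  | snoc {L : List (MvPolynomial (Fin n) K)} {T : MvPolynomial (Fin n) K} :
      RegularChain L → 0 < cls T → (∀ A ∈ L, cls A < cls T) → resTS (ini T) L ≠ 0 →
      RegularChain (L ++ [T])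

lemma RegularChain.of_pairwise {L : List (MvPolynomial (Fin n) K)} (hcls : ∀ T ∈ L, 0 < cls T)
    (hpair : L.Pairwise fun A B => cls A < cls B)
    (hres : ∀ j, 0 < j → j < L.length → resTS (ini (L.getD j 0)) (L.take j) ≠ 0) :
    RegularChain L := by
  induction L using List.reverseRecOn with
  | nil => exact .nil
  | append_singleton L T ih =>
    rw [List.pairwise_append] at hpair
    refine .snoc (ih (fun A hA => hcls A (by simp [hA])) hpair.1 fun j hj hjL => ?_)
      (hcls T (by simp)) (fun A hA => hpair.2.2 A hA T (by simp)) ?_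
    · have := hres j hj (by simp; omega)
      rwa [List.getD_append _ _ _ _ hjL, List.take_append, Nat.sub_eq_zero_of_le hjL.le,
        List.take_zero, List.append_nil] at this
    · rcases Nat.eq_zero_or_pos L.length with hL | hL
      · rw [List.length_eq_zero_iff.1 hL]
        exact ini_ne_zero (vars_nonempty_of_cls_pos (hcls T (by simp)))
      · have := hres L.length hL (by simp)
        rwa [List.getD_append_right _ _ _ _ le_rfl, Nat.sub_self, List.take_left] at this

lemma RegularSet.regularChain {L : List (MvPolynomial (Fin n) K)} (h : RegularSet L) :
    RegularChain L :=
  RegularChain.of_pairwise h.1.2.1 h.1.pairwise h.2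

lemma mem_satTS_iff {L : List (MvPolynomial (Fin n) K)} {F : MvPolynomial (Fin n) K} :
    F ∈ satTS L ↔ ∃ q, (L.map ini).prod ^ q * F ∈ Ideal.span {T | T ∈ L} := by
  refine ⟨fun ⟨q, _, hq⟩ => ⟨q, hq⟩, fun ⟨q, hq⟩ => ⟨q + 1, q.succ_pos, ?_⟩⟩
  rw [pow_succ', mul_assoc]
  exact Ideal.mul_mem_left _ _ hq

def satIdeal (L : List (MvPolynomial (Fin n) K)) : Ideal (MvPolynomial (Fin n) K) where
  carrier := satTS L
  zero_mem' := mem_satTS_iff.2 ⟨0, by simp⟩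
  add_mem' {F G} hF hG := by
    obtain ⟨p, hp⟩ := mem_satTS_iff.1 hF
    obtain ⟨q, hq⟩ := mem_satTS_iff.1 hG
    refine mem_satTS_iff.2 ⟨p + q, ?_⟩
    have heq : (L.map ini).prod ^ (p + q) * (F + G) = (L.map ini).prod ^ q *
        ((L.map ini).prod ^ p * F) + (L.map ini).prod ^ p * ((L.map ini).prod ^ q * G) := by ring
    rw [heq]
    exact Ideal.add_mem _ (Ideal.mul_mem_left _ _ hp) (Ideal.mul_mem_left _ _ hq)
  smul_mem' c {F} hF := by
    obtain ⟨q, hq⟩ := mem_satTS_iff.1 hF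
    refine mem_satTS_iff.2 ⟨q, ?_⟩
    rw [smul_eq_mul, mul_left_comm]
    exact Ideal.mul_mem_left _ _ hq

lemma mem_satIdeal {L : List (MvPolynomial (Fin n) K)} {F : MvPolynomial (Fin n) K} :
    F ∈ satIdeal L ↔ ∃ q, (L.map ini).prod ^ q * F ∈ Ideal.span {T | T ∈ L} :=
  mem_satTS_iff

lemma span_le_satIdeal (L : List (MvPolynomial (Fin n) K)) :
    Ideal.span {T | T ∈ L} ≤ satIdeal L :=
  fun F hF => mem_satIdeal.2 ⟨0, by rwa [pow_zero, one_mul]⟩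

lemma mem_satIdeal_nil {F : MvPolynomial (Fin n) K} : F ∈ satIdeal [] ↔ F = 0 := by
  simp [mem_satIdeal]

lemma satIdeal_le_append (L : List (MvPolynomial (Fin n) K)) (T : MvPolynomial (Fin n) K) :
    satIdeal L ≤ satIdeal (L ++ [T]) := by
  intro F hF
  obtain ⟨q, hq⟩ := mem_satIdeal.1 hF
  refine mem_satIdeal.2 ⟨q, ?_⟩
  rw [List.map_append, List.prod_append, mul_pow, mul_right_comm]
  exact Ideal.mul_mem_right _ _
    (Ideal.span_mono (fun A hA => List.mem_append_left _ hA) hq)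

lemma mem_satIdeal_of_ini_pow_mul_mem {L : List (MvPolynomial (Fin n) K)}
    {T : MvPolynomial (Fin n) K} (hT : T ∈ L) {k : ℕ} {F : MvPolynomial (Fin n) K}
    (h : ini T ^ k * F ∈ satIdeal L) : F ∈ satIdeal L := by
  obtain ⟨c, hc⟩ := List.dvd_prod (List.mem_map_of_mem (f := ini) hT)
  obtain ⟨q, hq⟩ := mem_satIdeal.1 h
  refine mem_satIdeal.2 ⟨q + k, ?_⟩
  have heq : (L.map ini).prod ^ (q + k) * F =
      c ^ k * ((L.map ini).prod ^ q * (ini T ^ k * F)) := by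
    rw [pow_add, hc]; ring
  rw [heq]
  exact Ideal.mul_mem_left _ _ hq

lemma degreeOf_premLv_lt {T : MvPolynomial (Fin n) K} (hv : T.vars.Nonempty)
    (F : MvPolynomial (Fin n) K) :
    (premLv F T).degreeOf (T.vars.max' hv) < T.degreeOf (T.vars.max' hv) := by
  rw [premLv, dif_pos hv]
  exact degreeOf_prem_lt (degreeOf_max'_vars_pos hv) F

lemma mul_premLv_mem_satIdeal {L : List (MvPolynomial (Fin n) K)} {T : MvPolynomial (Fin n) K}
    (hT : T ∈ L) (hv : T.vars.Nonempty) {B F : MvPolynomial (Fin n) K}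
    (h : B * F ∈ satIdeal L) : B * premLv F T ∈ satIdeal L := by
  have hdiv := pquo_mul_add_prem (degreeOf_max'_vars_pos hv) F
  rw [premLv, dif_pos hv, eq_sub_of_add_eq' hdiv, mul_sub]
  refine Ideal.sub_mem _ (by rw [mul_left_comm]; exact Ideal.mul_mem_left _ _ h) ?_
  exact Ideal.mul_mem_left _ _ (Ideal.mul_mem_left _ _ (span_le_satIdeal L (Ideal.subset_span hT)))

lemma premLv_mem_satIdeal_iff {L : List (MvPolynomial (Fin n) K)} {T : MvPolynomial (Fin n) K}
    (hT : T ∈ L) (hv : T.vars.Nonempty) {F : MvPolynomial (Fin n) K} :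
    premLv F T ∈ satIdeal L ↔ F ∈ satIdeal L := by
  refine ⟨fun h => ?_, fun h => by simpa using mul_premLv_mem_satIdeal hT hv (B := 1) (by simpa)⟩
  have hdiv := pquo_mul_add_prem (degreeOf_max'_vars_pos hv) F
  rw [premLv, dif_pos hv] at h
  refine mem_satIdeal_of_ini_pow_mul_mem hT (k := F.degreeOf (T.vars.max' hv) + 1 -
    T.degreeOf (T.vars.max' hv)) ?_
  rw [ini, dif_pos hv, ← hdiv]
  exact Ideal.add_mem _ (Ideal.mul_mem_left _ _
    (span_le_satIdeal L (Ideal.subset_span hT))) h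

lemma mem_of_pow_mul_mem {M : Type*} [Monoid M] {S : Set M} {c : M}
    (h : ∀ x, c * x ∈ S → x ∈ S) (k : ℕ) {x : M} (hx : c ^ k * x ∈ S) : x ∈ S := by
  induction k generalizing x with
  | zero => rwa [pow_zero, one_mul] at hx
  | succ k ih => exact h x (ih (by rwa [pow_succ, mul_assoc] at hx))

/-- `⟨L⟩` is generated by polynomials free of `lv T`, so `lcv_pow_mul_mem_of_mul_sub_mem`
applies to `a * T ≡ J ^ s * W (mod ⟨L⟩)`. -/
lemma mem_satIdeal_of_mem_satIdeal_append {L : List (MvPolynomial (Fin n) K)}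
    {T : MvPolynomial (Fin n) K} (hv : T.vars.Nonempty) (hLT : ∀ A ∈ L, cls A < cls T)
    (hcancel : ∀ F, ini T * F ∈ satIdeal L → F ∈ satIdeal L) {W : MvPolynomial (Fin n) K}
    (hW : W ∈ satIdeal (L ++ [T]))
    (hdeg : W.degreeOf (T.vars.max' hv) < T.degreeOf (T.vars.max' hv)) :
    W ∈ satIdeal L := by
  set x := T.vars.max' hv
  have hfree : ∀ A ∈ L, A.degreeOf x = 0 := fun A hA => degreeOf_eq_zero_of_cls_le <| by
    have := hLT A hA
    rw [cls_eq_max'_add_one hv] at this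
    omega
  have hini : ini T = lcv x T := dif_pos hv
  have hJ : ((L.map ini).prod * lcv x T).degreeOf x = 0 := by
    have := degreeOf_mul_le x (L.map ini).prod (lcv x T)
    rw [degreeOf_prod_ini_eq_zero hfree, degreeOf_lcv] at this
    omega
  obtain ⟨s, hs⟩ := mem_satIdeal.1 hW
  have hspan : {A | A ∈ L ++ [T]} = insert T {A | A ∈ L} := by ext; simp [or_comm]
  rw [List.map_append, List.prod_append, List.map_singleton, List.prod_singleton, hini, hspan,
    Ideal.mem_span_insert] at hs
  obtain ⟨a, z, hz, heq⟩ := hs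
  have hmem : a * T - ((L.map ini).prod * lcv x T) ^ s * W ∈ Ideal.span {A | A ∈ L} := by
    rw [heq, sub_add_cancel_left]
    exact neg_mem hz
  have hred := (degreeOf_mul_le_of_degreeOf_eq_zero (degreeOf_pow_eq_zero hJ s) W).trans_lt hdeg
  have := lcv_pow_mul_mem_of_mul_sub_mem
    (fun F hF t => coefv_mem_span_of_degreeOf_eq_zero hfree hF t) le_rfl hred hmem
  refine mem_of_pow_mul_mem hcancel (a.degreeOf x + 1 + s) (mem_satIdeal.2 ⟨s, ?_⟩)
  have hpow : (L.map ini).prod ^ s * (lcv x T ^ (a.degreeOf x + 1 + s) * W) =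
      lcv x T ^ (a.degreeOf x + 1) * (((L.map ini).prod * lcv x T) ^ s * W) := by ring
  rwa [hini, hpow]

/-- Since `res(A, T) = U * A + V * T`, the claim for `A` over `L ++ [T]` follows from the
claims for `res(A, T)` and for `ini T` over `L`. -/
theorem RegularChain.mem_satIdeal_of_mul_mem {L : List (MvPolynomial (Fin n) K)}
    (hL : RegularChain L) {A : MvPolynomial (Fin n) K} (hA : resTS A L ≠ 0)
    {F : MvPolynomial (Fin n) K} (h : A * F ∈ satIdeal L) : F ∈ satIdeal L := by
  induction hL generalizing A F with
  | nil =>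
    rw [mem_satIdeal_nil] at h ⊢
    exact (mul_eq_zero.1 h).resolve_left hA
  | @snoc L T _ hcls hLT hini ih =>
    have hv := vars_nonempty_of_cls_pos hcls
    have hTmem : T ∈ L ++ [T] := by simp
    have hB : resTS (resv A T (T.vars.max' hv)) L ≠ 0 := by
      rwa [resTS_append, resLv, dif_pos hv] at hA
    have hBF : resv A T (T.vars.max' hv) * F ∈ satIdeal (L ++ [T]) := by
      obtain ⟨U, V, hUV⟩ :=
        Ideal.mem_span_pair.1 (resv_mem_span_pair (degreeOf_max'_vars_pos hv) A)
      rw [← hUV, add_mul, mul_assoc, mul_right_comm]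
      exact Ideal.add_mem _ (Ideal.mul_mem_left _ _ h)
        (Ideal.mul_mem_left _ _ (span_le_satIdeal _ (Ideal.subset_span hTmem)))
    have hdeg := (degreeOf_mul_le_of_degreeOf_eq_zero (degreeOf_resv A T _) _).trans_lt
      (degreeOf_premLv_lt hv F)
    have hBR := mem_satIdeal_of_mem_satIdeal_append hv hLT (fun _ => ih hini)
      (mul_premLv_mem_satIdeal hTmem hv hBF) hdeg
    exact (premLv_mem_satIdeal_iff hTmem hv).1 (satIdeal_le_append L T (ih hB hBR))

theorem RegularChain.premTS_eq_zero_of_mem_satIdeal {L : List (MvPolynomial (Fin n) K)}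
    (hL : RegularChain L) {F : MvPolynomial (Fin n) K} (h : F ∈ satIdeal L) :
    premTS F L = 0 := by
  induction hL generalizing F with
  | nil => exact mem_satIdeal_nil.1 h
  | @snoc L T hL hcls hLT hini ih =>
    have hv := vars_nonempty_of_cls_pos hcls
    rw [premTS_append]
    have hcancel : ∀ G, ini T * G ∈ satIdeal L → G ∈ satIdeal L :=
      fun _ => hL.mem_satIdeal_of_mul_mem hini
    exact ih (mem_satIdeal_of_mem_satIdeal_append hv hLT hcancel
      ((premLv_mem_satIdeal_iff (by simp) hv).2 h) (degreeOf_premLv_lt hv F))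

theorem mem_satIdeal_of_premTS_eq_zero {L : List (MvPolynomial (Fin n) K)}
    (hL : ∀ T ∈ L, 0 < cls T) {F : MvPolynomial (Fin n) K} (h : premTS F L = 0) :
    F ∈ satIdeal L := by
  induction L using List.reverseRecOn generalizing F with
  | nil => exact mem_satIdeal_nil.2 h
  | append_singleton L T ih =>
    rw [premTS_append] at h
    have hR := ih (fun A hA => hL A (by simp [hA])) h
    exact (premLv_mem_satIdeal_iff (by simp) (vars_nonempty_of_cls_pos (hL T (by simp)))).1
      (satIdeal_le_append L T hR)

theorem RegularSet.premTS_eq_zero_iff {L : List (MvPolynomial (Fin n) K)} (hL : RegularSet L)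
    {F : MvPolynomial (Fin n) K} : premTS F L = 0 ↔ F ∈ satIdeal L :=
  ⟨mem_satIdeal_of_premTS_eq_zero hL.1.2.1, hL.regularChain.premTS_eq_zero_of_mem_satIdeal⟩

lemma coefv_mem_satIdeal {L : List (MvPolynomial (Fin n) K)} {i : Fin n}
    (hfree : ∀ T ∈ L, T.degreeOf i = 0) {F : MvPolynomial (Fin n) K} (h : F ∈ satIdeal L)
    (t : ℕ) : coefv i t F ∈ satIdeal L := by
  obtain ⟨q, hq⟩ := mem_satIdeal.1 h
  refine mem_satIdeal.2 ⟨q, ?_⟩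
  rw [← coefv_mul_of_degreeOf_eq_zero (degreeOf_pow_eq_zero (degreeOf_prod_ini_eq_zero hfree) q)]
  exact coefv_mem_span_of_degreeOf_eq_zero hfree hq t

lemma mem_of_forall_coefv_mem {I : Ideal (MvPolynomial (Fin n) K)} (i : Fin n)
    {F : MvPolynomial (Fin n) K} (h : ∀ t ≤ F.degreeOf i, coefv i t F ∈ I) : F ∈ I := by
  rw [← sum_coefv_mul_X_pow i F]
  exact I.sum_mem fun t ht => I.mul_mem_right _ (h t (Nat.lt_succ_iff.1 (Finset.mem_range.1 ht)))

theorem statement3_general {n : ℕ} {K : Type*} [Field K] (L : List (MvPolynomial (Fin n) K))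
    (hreg : RegularSet L)
    (P : MvPolynomial (Fin n) K) (m : Fin n)
    (hm : cls (L.getD (L.length - 1) 0) < (m : ℕ) + 1) :
    premTS P L = 0 ↔ ∀ j ≤ P.degreeOf m, premTS (coefv m j P) L = 0 := by
  have hfree : ∀ T ∈ L, T.degreeOf m = 0 := fun T hT =>
    degreeOf_eq_zero_of_cls_le (Nat.le_of_lt_succ ((hreg.1.cls_le_last hT).trans_lt hm))
  simp only [hreg.premTS_eq_zero_iff]
  exact ⟨fun h j _ => coefv_mem_satIdeal hfree h j, mem_of_forall_coefv_mem m⟩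

/-- Let `T = [T_1, …, T_r]` be a regular set with `p_r = cls(T_r) < n`,
and let `P` be a polynomial of degree `d > 0` in a variable `x_m` with `m > p_r`.
Then `prem(P, T) = 0` iff `prem(P_j, T) = 0` for all coefficients `P_j` of `P`
w.r.t. `x_m`, `0 ≤ j ≤ d`. -/
theorem statement3 {n : ℕ} {K : Type*} [Field K] (L : List (MvPolynomial (Fin n) K))
    (hreg : RegularSet L)
    (hpr : cls (L.getD (L.length - 1) 0) < n)
    (P : MvPolynomial (Fin n) K) (m : Fin n)
    (hm : cls (L.getD (L.length - 1) 0) < (m : ℕ) + 1)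
    (hd : 0 < P.degreeOf m) :
    premTS P L = 0 ↔ ∀ j ≤ P.degreeOf m, premTS (coefv m j P) L = 0 :=
  statement3_general L hreg P m hm

end CharSets
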